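/- Let M_R be an (σ,δ)-compatible module satisfying condition (*). If m(x) = Σ_{i=0}^p m_i x^i ∈ M[x;σ,δ] and f(x) = Σ_{j=0}^q a_j x^j ∈ R[x;σ,δ]\{0} satisfy m(x)f(x) = 0, then m_i a_q^{p+1} = 0 for all i = 0, 1, …, p. -/

import Mathlib

open MulOpposite

/-- `fw σ δ i j` is `f_i^j`, the sum of all words in `σ`, `δ` built with `i` factors of `σ`
and `j - i` factors of `δ`. -/
def fw {R : Type*} [Ring R] (σ δ : R → R) : ℕ → ℕ → R → R
  | 0, 0 => id
  | _ + 1, 0 => fun _ => 0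
  | 0, j + 1 => fun a => δ (fw σ δ 0 j a)
  | i + 1, j + 1 => fun a => σ (fw σ δ i j a) + δ (fw σ δ (i + 1) j a)

/-- Multiplication of the Ore extension `R[x;σ,δ]`, on coefficient sequences. -/
noncomputable def skewMul {R : Type*} [Ring R] (σ δ : R → R) (p q : ℕ →₀ R) : ℕ →₀ R :=
  p.sum fun j a => q.sum fun l b =>
    ∑ i ∈ Finset.range (j + 1), Finsupp.single (i + l) (a * fw σ δ i j b)

/-- The action of `R[x;σ,δ]` on the skew polynomial module `M[x;σ,δ]`, where `M` is a
right `R`-module (a module over `Rᵐᵒᵖ`): `(m x^j)·(b x^l) = Σ_{i≤j} (m·f_i^j(b)) x^{i+l}`. -/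
noncomputable def skewSMul {R : Type*} [Ring R] (σ δ : R → R) {M : Type*} [AddCommGroup M]
    [Module Rᵐᵒᵖ M] (m : ℕ →₀ M) (q : ℕ →₀ R) : ℕ →₀ M :=
  m.sum fun j mm => q.sum fun l b =>
    ∑ i ∈ Finset.range (j + 1), Finsupp.single (i + l) (op (fw σ δ i j b) • mm)

/-- A right `R`-module `M` is `(σ,δ)`-skew McCoy if whenever `m(x) g(x) = 0` in `M[x;σ,δ]`
with `g(x) ≠ 0`, there is a nonzero `a ∈ R` with `m(x) a = 0`. -/
def IsSkewMcCoy {R : Type*} [Ring R] (σ δ : R → R) (M : Type*) [AddCommGroup M]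
    [Module Rᵐᵒᵖ M] : Prop :=
  ∀ (m : ℕ →₀ M) (g : ℕ →₀ R), g ≠ 0 → skewSMul σ δ m g = 0 →
    ∃ a : R, a ≠ 0 ∧ skewSMul σ δ m (Finsupp.single 0 a) = 0

/-- A right `R`-module `M` is `(σ,δ)`-skew Armendariz if `m(x) g(x) = 0` implies
`(m_i x^i)(b_j x^j) = 0` for all `i, j`. -/
def IsSkewArmendariz {R : Type*} [Ring R] (σ δ : R → R) (M : Type*) [AddCommGroup M]
    [Module Rᵐᵒᵖ M] : Prop :=
  ∀ (m : ℕ →₀ M) (g : ℕ →₀ R), skewSMul σ δ m g = 0 →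
    ∀ i j, skewSMul σ δ (Finsupp.single i (m i)) (Finsupp.single j (g j)) = 0

/-- `σ`-compatibility of a right module: `m a = 0 ↔ m σ(a) = 0`. -/
def SigmaCompatible {R : Type*} [Ring R] (σ : R → R) (M : Type*) [AddCommGroup M]
    [Module Rᵐᵒᵖ M] : Prop :=
  ∀ (m : M) (a : R), op a • m = 0 ↔ op (σ a) • m = 0

/-- `δ`-compatibility of a right module: `m a = 0 → m δ(a) = 0`. -/
def DeltaCompatible {R : Type*} [Ring R] (δ : R → R) (M : Type*) [AddCommGroup M]
    [Module Rᵐᵒᵖ M] : Prop :=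
  ∀ (m : M) (a : R), op a • m = 0 → op (δ a) • m = 0

/-- A right module `M` is reduced if `m a = 0` implies `mR ∩ Ma = 0`. -/
def IsReducedModule {R : Type*} [Ring R] (M : Type*) [AddCommGroup M]
    [Module Rᵐᵒᵖ M] : Prop :=
  ∀ (m : M) (a : R), op a • m = 0 →
    ∀ x : M, (∃ r : R, op r • m = x) → (∃ m' : M, op a • m' = x) → x = 0

/-- Condition `(*)`: `m(x) f(x) = 0` implies `m(x) R f(x) = 0`. -/
def StarCondition {R : Type*} [Ring R] (σ δ : R → R) (M : Type*) [AddCommGroup M]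
    [Module Rᵐᵒᵖ M] : Prop :=
  ∀ (m : ℕ →₀ M) (f : ℕ →₀ R), skewSMul σ δ m f = 0 →
    ∀ r : R, skewSMul σ δ m (skewMul σ δ (Finsupp.single 0 r) f) = 0

/-!
Let `a` be the leading coefficient of `f`, of degree `q`, and `p` the degree of `m`. By induction
on `k` one shows `m_j a^k = 0` whenever `p < j + k`. For the step, condition `(*)` gives
`m(x) (a^k f(x)) = 0`. In the coefficient of `x^(j+q)` every term `m_{j'} f_i^{j'}(a^k a_l)` with
`j' > j` vanishes by induction and compatibility, and degree counting leaves only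
`m_j f_j^j(a^(k+1))`. Modulo elements annihilating all of `M`, `f_j^j = σ^j`, so
`σ`-compatibility strips it off.
-/

section Compatible

variable {R : Type*} [Ring R] {σ δ : R → R} {M : Type*} [AddCommGroup M] [Module Rᵐᵒᵖ M]

theorem fw_smul_eq_zero (hσ : SigmaCompatible σ M) (hδc : DeltaCompatible δ M) :
    ∀ (j i : ℕ) {b : R} {x : M}, op b • x = 0 → op (fw σ δ i j b) • x = 0
  | 0, 0, _, _, hb => hb
  | 0, _ + 1, _, _, _ => by simp [fw]
  | j + 1, 0, _, _, hb => hδc _ _ (fw_smul_eq_zero hσ hδc j 0 hb)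
  | j + 1, i + 1, _, _, hb => by
    rw [fw, op_add, add_smul, (hσ _ _).mp (fw_smul_eq_zero hσ hδc j i hb),
      hδc _ _ (fw_smul_eq_zero hσ hδc j (i + 1) hb), add_zero]

theorem fw_smul_eq_zero_of_lt (hσ : SigmaCompatible σ M) (hδc : DeltaCompatible δ M) :
    ∀ {j i : ℕ}, j < i → ∀ (b : R) (x : M), op (fw σ δ i j b) • x = 0
  | 0, _ + 1, _, _, _ => by simp [fw]
  | j + 1, i + 1, hji, b, x => by
    rw [fw, op_add, add_smul,
      (hσ _ _).mp (fw_smul_eq_zero_of_lt hσ hδc (Nat.lt_of_succ_lt_succ hji) b x),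
      hδc _ _ (fw_smul_eq_zero_of_lt hσ hδc (Nat.lt_of_succ_lt hji) b x), add_zero]

theorem smul_eq_zero_of_fw_diag_smul_eq_zero (hσ : SigmaCompatible σ M)
    (hδc : DeltaCompatible δ M) : ∀ (j : ℕ) {b : R} {x : M},
    op (fw σ δ j j b) • x = 0 → op b • x = 0
  | 0, _, _, hb => hb
  | j + 1, b, x, hb => by
    rw [fw, op_add, add_smul, hδc _ _ (fw_smul_eq_zero_of_lt hσ hδc j.lt_succ_self b x),
      add_zero] at hb
    exact smul_eq_zero_of_fw_diag_smul_eq_zero hσ hδc j ((hσ _ _).mpr hb)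

end Compatible

section Coefficients

variable {R : Type*} [Ring R] (σ δ : R → R) {M : Type*} [AddCommGroup M] [Module Rᵐᵒᵖ M]

theorem skewSMul_apply (m : ℕ →₀ M) (g : ℕ →₀ R) (n : ℕ) :
    skewSMul σ δ m g n =
      ∑ j ∈ m.support, ∑ l ∈ g.support, ∑ i ∈ Finset.range (j + 1),
        if i + l = n then op (fw σ δ i j (g l)) • m j else 0 := by
  simp only [skewSMul, Finsupp.sum, Finset.sum_apply', Finsupp.single_apply]

theorem skewMul_single_zero_apply (r : R) (f : ℕ →₀ R) (n : ℕ) :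
    skewMul σ δ (Finsupp.single 0 r) f n = r * f n := by
  rw [skewMul, Finsupp.sum_single_index (by simp)]
  simp only [zero_add, Finset.range_one, Finset.sum_singleton, fw, id, Finsupp.sum_apply,
    Finsupp.single_apply]
  rw [Finsupp.sum_ite_eq' f n (fun _ b => r * b)]
  split_ifs with hn
  · rfl
  · rw [Finsupp.notMem_support_iff.mp hn, mul_zero]

variable {σ δ}

theorem skewSMul_apply_add (hσ : SigmaCompatible σ M) (hδc : DeltaCompatible δ M)
    {m : ℕ →₀ M} {g : ℕ →₀ R} {j q : ℕ} (hg : ∀ l, q < l → g l = 0)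
    (hm : ∀ j', j < j' → ∀ l, op (g l) • m j' = 0) :
    skewSMul σ δ m g (j + q) = op (fw σ δ j j (g q)) • m j := by
  have hle : ∀ l ∈ g.support, l ≤ q := fun l hl =>
    not_lt.mp fun hql => Finsupp.mem_support_iff.mp hl (hg l hql)
  have hdiag : ∑ i ∈ Finset.range (j + 1),
      (if i + q = j + q then op (fw σ δ i j (g q)) • m j else 0) =
        op (fw σ δ j j (g q)) • m j := by
    simp
  rw [skewSMul_apply]
  refine (Finset.sum_eq_single j (fun j' _ hne => ?_) fun hj => ?_).trans ?_
  · refine Finset.sum_eq_zero fun l hl => Finset.sum_eq_zero fun i hi => ?_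
    have hi := Finset.mem_range_succ_iff.mp hi
    rcases hne.lt_or_gt with hlt | hgt
    · rw [if_neg (by have := hle l hl; omega)]
    · rw [fw_smul_eq_zero hσ hδc j' i (hm j' hgt l), ite_self]
  · simp [Finsupp.notMem_support_iff.mp hj]
  refine (Finset.sum_eq_single q (fun l hl hne => ?_) fun hq => ?_).trans hdiag
  · refine Finset.sum_eq_zero fun i hi => ?_
    have := Finset.mem_range_succ_iff.mp hi
    rw [if_neg (by have := hle l hl; omega)]
  · rw [hdiag, Finsupp.notMem_support_iff.mp hq]
    exact fw_smul_eq_zero hσ hδc j j (zero_smul _ _)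

end Coefficients

theorem smul_pow_eq_zero_of_skewSMul_eq_zero {R : Type*} [Ring R] {σ δ : R → R} {M : Type*}
    [AddCommGroup M] [Module Rᵐᵒᵖ M] (hσ : SigmaCompatible σ M) (hδc : DeltaCompatible δ M)
    (hstar : StarCondition σ δ M) {m : ℕ →₀ M} {f : ℕ →₀ R} (h : skewSMul σ δ m f = 0)
    {q : ℕ} (hf : ∀ l, q < l → f l = 0) :
    ∀ (k j : ℕ), m.support.sup id < j + k → op (f q ^ k) • m j = 0
  | 0, j, hj => by
    have hmj : m j = 0 := Finsupp.notMem_support_iff.mp fun hmem =>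
      (Finset.le_sup (f := id) hmem).not_gt hj
    rw [hmj, smul_zero]
  | k + 1, j, hj => by
    set g := skewMul σ δ (Finsupp.single 0 (f q ^ k)) f
    have hgl (l : ℕ) : g l = f q ^ k * f l := skewMul_single_zero_apply σ δ _ f l
    have hcoeff := skewSMul_apply_add hσ hδc (m := m) (j := j)
      (fun l hl => by rw [hgl, hf l hl, mul_zero])
      fun j' hj' l => by
        rw [hgl, op_mul, mul_smul,
          smul_pow_eq_zero_of_skewSMul_eq_zero hσ hδc hstar h hf k j' (by omega), smul_zero]
    rw [hstar m f h (f q ^ k), Finsupp.zero_apply, hgl, ← pow_succ] at hcoeff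
    exact smul_eq_zero_of_fw_diag_smul_eq_zero hσ hδc j hcoeff.symm

theorem compatible_star_leading_general {R : Type*} [Ring R] (σ : R →+* R) (δ : R → R)
    (M : Type*) [AddCommGroup M] [Module Rᵐᵒᵖ M]
    (hσ : SigmaCompatible ⇑σ M) (hδc : DeltaCompatible δ M)
    (hstar : StarCondition ⇑σ δ M)
    (m : ℕ →₀ M) (f : ℕ →₀ R) (hf : f ≠ 0) (h : skewSMul ⇑σ δ m f = 0) :
    ∀ i : ℕ,
      op (f (f.support.max' (Finsupp.support_nonempty_iff.mpr hf)) ^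
        (m.support.sup id + 1)) • m i = 0 := fun i =>
  smul_pow_eq_zero_of_skewSMul_eq_zero hσ hδc hstar h
    (fun l hl => Finsupp.notMem_support_iff.mp fun hmem => (Finset.le_max' _ l hmem).not_gt hl)
    _ i (by omega)

/-- Let `M_R` be `(σ,δ)`-compatible and satisfy condition `(*)`. If `m(x) f(x) = 0` with
`f(x) ≠ 0`, then `m_i a_q^{p+1} = 0` for all `i`, where `a_q` is the leading coefficient
of `f(x)` and `p` the degree of `m(x)`. -/
theorem compatible_star_leading {R : Type*} [Ring R] (σ : R →+* R) (δ : R → R)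
    (hδadd : ∀ a b : R, δ (a + b) = δ a + δ b)
    (hδmul : ∀ a b : R, δ (a * b) = σ a * δ b + δ a * b)
    (M : Type*) [AddCommGroup M] [Module Rᵐᵒᵖ M]
    (hσ : SigmaCompatible ⇑σ M) (hδc : DeltaCompatible δ M)
    (hstar : StarCondition ⇑σ δ M)
    (m : ℕ →₀ M) (f : ℕ →₀ R) (hf : f ≠ 0) (h : skewSMul ⇑σ δ m f = 0) :
    ∀ i : ℕ,
      op (f (f.support.max' (Finsupp.support_nonempty_iff.mpr hf)) ^
        (m.support.sup id + 1)) • m i = 0 :=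
  compatible_star_leading_general σ δ M hσ hδc hstar m f hf h
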